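/- (Proposition c, concrete form.) Let n ≥ 2, 1 ≤ k ≤ n − 1, p_{k+1},…,p_n > 0 with p_{k+1} < 1/2, and let q > 0. Then there exists c' ∈ (0,1) such that for every holomorphic h : 𝔼' → ℂ with h ≢ 0, the function ζ ↦ |h(ζ)| · r(ζ)^{q} does not attain its maximum over 𝔼' at any point of the form (w, 0, …, 0) with 0 < |w| < c'. -/

import Mathlib

open Finset

noncomputable def mob {n : ℕ} (G A : Set (Fin n → ℂ)) (z : Fin n → ℂ) : ℝ :=
  sSup {x : ℝ | ∃ f : (Fin n → ℂ) → ℂ, DifferentiableOn ℂ f G ∧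
    (∀ w ∈ G, ‖f w‖ < 1) ∧ (∀ w ∈ A, f w = 0) ∧ x = ‖f z‖}

noncomputable def ellipsoid {n : ℕ} (p : Fin n → ℝ) : Set (Fin n → ℂ) :=
  {z | ∑ j, ‖z j‖ ^ (2 * p j) < 1}

def zeroSet {n : ℕ} (p : Fin n → ℝ) (k : ℕ) : Set (Fin n → ℂ) :=
  {z ∈ ellipsoid p | ∏ j ∈ univ.filter (fun j : Fin n => (j : ℕ) < k), z j = 0}

noncomputable def qq {n : ℕ} (p : Fin n → ℝ) (s : ℕ) : ℝ :=
  ∑ j ∈ univ.filter (fun j : Fin n => (j : ℕ) < s), (2 * p j)⁻¹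

noncomputable def rr {n : ℕ} (p : Fin n → ℝ) (z : Fin n → ℂ) (s : ℕ) : ℝ :=
  1 - ∑ j ∈ univ.filter (fun j : Fin n => s ≤ (j : ℕ)), ‖z j‖ ^ (2 * p j)

noncomputable def cc {n : ℕ} (p : Fin n → ℝ) (z : Fin n → ℂ) (s : ℕ) : ℝ :=
  rr p z s / qq p s

noncomputable def dd {n : ℕ} (p : Fin n → ℝ) (z : Fin n → ℂ) (k : ℕ) : ℕ :=
  sSup {s : ℕ | 1 ≤ s ∧ s ≤ k ∧
    ∀ hs : s - 1 < n,
      2 * p ⟨s - 1, hs⟩ * ‖z ⟨s - 1, hs⟩‖ ^ (2 * p ⟨s - 1, hs⟩) ≤ cc p z s}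

noncomputable def RR {n : ℕ} (p : Fin n → ℝ) (z : Fin n → ℂ) (k : ℕ) : ℝ :=
  ∏ j ∈ univ.filter (fun j : Fin n => (j : ℕ) < dd p z k),
    ‖z j‖ * (2 * p j / cc p z (dd p z k)) ^ (2 * p j)⁻¹

def monIncr {n : ℕ} (p : Fin n → ℝ) (z : Fin n → ℂ) (k : ℕ) : Prop :=
  ∀ i j : Fin n, (j : ℕ) < k → i ≤ j →
    p i * ‖z i‖ ^ (2 * p i) ≤ p j * ‖z j‖ ^ (2 * p j)

noncomputable def pshift {n : ℕ} (p : Fin n → ℝ) (D : ℕ) (j : Fin (n - D)) : ℝ :=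
  if h : D + (j : ℕ) < n then p ⟨D + (j : ℕ), h⟩ else 0

noncomputable def zrest {n : ℕ} (z : Fin n → ℂ) (D : ℕ) (j : Fin (n - D)) : ℂ :=
  if h : D + (j : ℕ) < n then z ⟨D + (j : ℕ), h⟩ else 0

noncomputable def rrest {n : ℕ} (p : Fin n → ℝ) (D : ℕ) (ζ : Fin (n - D) → ℂ) : ℝ :=
  1 - ∑ j, ‖ζ j‖ ^ (2 * pshift p D j)

/-!
Along the slice `t ↦ (t, 0, …, 0)` the weight is `r = 1 - |t|^a` with `a = 2 p_{k+1} < 1`.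
If `|g| (1 - |t|^a)^q` is maximal at `w` with `g w ≠ 0`, the maximal value bounds `g` on the disc
of radius `1/2`, so Schwarz's lemma gives `|g w - g 0| = O(|w|) |g w|`. Comparing with the value
at `0` and using Bernoulli's inequality gives `|g 0| ≤ (1 - min q 1 * |w|^a) |g w|`. Together these
force `|w|^a = O(|w|)`, which fails for small `|w|` since `a < 1`.
-/

open Metric

section OneVariable

variable {E : Type*} [NormedAddCommGroup E] [NormedSpace ℂ E]

theorem norm_sub_le_of_norm_le_on_ball {g : ℂ → E} {R M : ℝ}
    (hg : DifferentiableOn ℂ g (ball 0 R)) (hM : ∀ t ∈ ball (0 : ℂ) R, ‖g t‖ ≤ M) {w : ℂ}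
    (hw : w ∈ ball (0 : ℂ) R) : ‖g w - g 0‖ ≤ 2 * M / R * ‖w‖ := by
  have h0 : ‖g 0‖ ≤ M := hM 0 (mem_ball_self (pos_of_mem_ball hw))
  have hmaps : Set.MapsTo g (ball 0 R) (closedBall (g 0) (2 * M)) := fun t ht => by
    rw [mem_closedBall, dist_eq_norm]
    linarith [norm_sub_le (g t) (g 0), hM t ht]
  simpa [dist_eq_norm] using Complex.dist_le_div_mul_dist_of_mapsTo_ball hg hmaps hw

theorem one_sub_rpow_le_one_sub_min_mul {u q : ℝ} (hu0 : 0 ≤ u) (hu1 : u < 1) (hq : 0 < q) :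
    (1 - u) ^ q ≤ 1 - min q 1 * u :=
  calc (1 - u) ^ q ≤ (1 - u) ^ min q 1 :=
        Real.rpow_le_rpow_of_exponent_ge (by linarith) (by linarith) (min_le_left _ _)
    _ = (1 + -u) ^ min q 1 := by ring_nf
    _ ≤ 1 + min q 1 * -u :=
        rpow_one_add_le_one_add_mul_self (by linarith) (le_min hq.le zero_le_one) (min_le_right _ _)
    _ = 1 - min q 1 * u := by ring

theorem min_mul_rpow_le_of_isMaxOn {a q : ℝ} (ha : 0 < a) (hq : 0 < q) {g : ℂ → E}
    (hg : DifferentiableOn ℂ g (ball 0 1)) {w : ℂ} (hw : ‖w‖ < 1 / 2) (hgw : g w ≠ 0)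
    (hmax : IsMaxOn (fun t => ‖g t‖ * (1 - ‖t‖ ^ a) ^ q) (ball 0 1) w) :
    min q 1 * (1 - (1 / 2) ^ a) ^ q * ‖w‖ ^ a ≤ 4 * ‖w‖ := by
  rw [isMaxOn_iff] at hmax
  set κ : ℝ := (1 - (1 / 2 : ℝ) ^ a) ^ q
  set u : ℝ := ‖w‖ ^ a
  set m : ℝ := ‖g w‖ * (1 - u) ^ q
  have hu0 : 0 ≤ u := by positivity
  have hu1 : u < 1 := Real.rpow_lt_one (norm_nonneg w) (by linarith) ha
  have hhalf : 0 < 1 - (1 / 2 : ℝ) ^ a :=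
    sub_pos.2 (Real.rpow_lt_one (by norm_num) (by norm_num) ha)
  have hκ : 0 < κ := Real.rpow_pos_of_pos hhalf q
  have hbound : ∀ t ∈ ball (0 : ℂ) (1 / 2), ‖g t‖ ≤ m / κ := by
    intro t ht
    rw [mem_ball_zero_iff] at ht
    have hκt : κ ≤ (1 - ‖t‖ ^ a) ^ q :=
      Real.rpow_le_rpow hhalf.le (by linarith [Real.rpow_le_rpow (norm_nonneg t) ht.le ha.le]) hq.le
    rw [le_div_iff₀ hκ]
    exact (mul_le_mul_of_nonneg_left hκt (norm_nonneg _)).trans (hmax t (by simp; linarith))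
  have hlip := norm_sub_le_of_norm_le_on_ball (hg.mono (ball_subset_ball (by norm_num))) hbound
    (mem_ball_zero_iff.2 hw)
  have hg0 : ‖g 0‖ ≤ m := by
    simpa [Real.zero_rpow ha.ne'] using hmax 0 (mem_ball_self one_pos)
  have hbern := one_sub_rpow_le_one_sub_min_mul hu0 hu1 hq
  have hgw_pos : 0 < ‖g w‖ := norm_pos_iff.2 hgw
  have hmul : ‖g w‖ * (min q 1 * κ * u) ≤ ‖g w‖ * (4 * ‖w‖) := by
    have hmG : m ≤ ‖g w‖ * (1 - min q 1 * u) := mul_le_mul_of_nonneg_left hbern hgw_pos.le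
    have hm : m ≤ ‖g w‖ := by
      nlinarith [mul_nonneg hgw_pos.le (mul_nonneg (le_min hq.le zero_le_one) hu0)]
    have htri : ‖g w‖ * κ ≤ 4 * m * ‖w‖ + m * κ := by
      have := norm_le_norm_sub_add (g w) (g 0)
      have : 2 * (m / κ) / (1 / 2) * ‖w‖ * κ = 4 * m * ‖w‖ := by field_simp; ring
      nlinarith
    nlinarith [norm_nonneg w]
  exact le_of_mul_le_mul_left hmul hgw_pos

theorem exists_mul_lt_rpow_of_lt_one {a C : ℝ} (ha : a < 1) (hC : 0 < C) :
    ∃ c > 0, ∀ ρ : ℝ, 0 < ρ → ρ < c → C * ρ < ρ ^ a := by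
  refine ⟨C⁻¹ ^ (1 - a)⁻¹, by positivity, fun ρ hρ hρc => ?_⟩
  have h1 : ρ ^ (1 - a) < C⁻¹ := by
    calc ρ ^ (1 - a) < (C⁻¹ ^ (1 - a)⁻¹) ^ (1 - a) := by gcongr
      _ = C⁻¹ := by
        rw [← Real.rpow_mul (by positivity), inv_mul_cancel₀ (by linarith), Real.rpow_one]
  calc C * ρ = C * ρ ^ (1 - a) * ρ ^ a := by
        rw [mul_assoc, ← Real.rpow_add hρ]; norm_num
    _ < C * C⁻¹ * ρ ^ a := by gcongr
    _ = ρ ^ a := by rw [mul_inv_cancel₀ hC.ne', one_mul]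

theorem exists_forall_not_isMaxOn_norm_mul_one_sub_rpow {a q : ℝ} (ha0 : 0 < a) (ha1 : a < 1)
    (hq : 0 < q) :
    ∃ c, 0 < c ∧ c < 1 ∧ ∀ g : ℂ → E, DifferentiableOn ℂ g (ball 0 1) →
      ∀ w : ℂ, 0 < ‖w‖ → ‖w‖ < c → g w ≠ 0 →
        ¬ IsMaxOn (fun t => ‖g t‖ * (1 - ‖t‖ ^ a) ^ q) (ball 0 1) w := by
  have hκ : 0 < (1 - (1 / 2 : ℝ) ^ a) ^ q :=
    Real.rpow_pos_of_pos (sub_pos.2 (Real.rpow_lt_one (by norm_num) (by norm_num) ha0)) q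
  obtain ⟨c, hc, hlt⟩ := exists_mul_lt_rpow_of_lt_one ha1
    (by positivity : 0 < 4 / (min q 1 * (1 - (1 / 2 : ℝ) ^ a) ^ q))
  refine ⟨min c (1 / 2), lt_min hc (by norm_num), (min_le_right _ _).trans_lt (by norm_num),
    fun g hg w hw0 hwc hgw hmax => ?_⟩
  have hle := min_mul_rpow_le_of_isMaxOn ha0 hq hg (hwc.trans_le (min_le_right _ _)) hgw hmax
  have hgt := hlt ‖w‖ hw0 (hwc.trans_le (min_le_left _ _))
  rw [div_mul_eq_mul_div, div_lt_iff₀ (by positivity)] at hgt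
  linarith

end OneVariable

theorem sum_norm_pi_single_rpow {m : ℕ} {p : Fin m → ℝ} {i : Fin m} (hp : ∀ j ≠ i, p j ≠ 0)
    (t : ℂ) : ∑ j, ‖(Pi.single i t : Fin m → ℂ) j‖ ^ (2 * p j) = ‖t‖ ^ (2 * p i) := by
  rw [Fintype.sum_eq_single i fun j hj => ?_]
  · simp
  · simp [hj, Real.zero_rpow (mul_ne_zero two_ne_zero (hp j hj))]

theorem differentiable_pi_single {m : ℕ} (i : Fin m) :
    Differentiable ℂ (Pi.single (M := fun _ : Fin m => ℂ) i) :=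
  fun t => (hasFDerivAt_single (E := fun _ : Fin m => ℂ) (i := i) t).differentiableAt

theorem pi_single_mem_ellipsoid {m : ℕ} {p : Fin m → ℝ} {i : Fin m} (hp : ∀ j, 0 < p j)
    {t : ℂ} (ht : ‖t‖ < 1) : Pi.single i t ∈ ellipsoid p := by
  rw [ellipsoid, Set.mem_ofPred_eq, sum_norm_pi_single_rpow fun j _ => (hp j).ne']
  exact Real.rpow_lt_one (norm_nonneg t) ht (by linarith [hp i])

theorem rrest_pos_of_mem_ellipsoid {n D : ℕ} {p : Fin n → ℝ} {ζ : Fin (n - D) → ℂ}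
    (hζ : ζ ∈ ellipsoid (pshift p D)) : 0 < rrest p D ζ :=
  sub_pos.2 hζ

theorem pshift_pos {n D : ℕ} {p : Fin n → ℝ} (hp : ∀ j : Fin n, D ≤ (j : ℕ) → 0 < p j)
    (j : Fin (n - D)) : 0 < pshift p D j := by
  rw [pshift, dif_pos (by omega)]
  exact hp _ (Nat.le_add_right _ _)

theorem pshift_apply {n D : ℕ} (p : Fin n → ℝ) (j : Fin (n - D)) :
    pshift p D j = p ⟨D + j, by omega⟩ :=
  dif_pos (by omega)

theorem ite_val_eq_zero_eq_pi_single {m : ℕ} {i : Fin m} (hi : (i : ℕ) = 0) (t : ℂ) :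
    (fun j : Fin m => if (j : ℕ) = 0 then t else 0) = Pi.single i t := by
  funext j
  simp [Pi.single_apply, Fin.ext_iff, hi]

/-- Proposition c, concrete form: if `p_{k+1} < 1/2`, then for some `c' ∈ (0,1)`
no `h ∈ 𝒪(𝔼')`, `h ≢ 0`, can be such that `|h| r^q` attains its maximum over
`𝔼'` at a point `(w,0,…,0)` with `0 < |w| < c'`. -/
theorem stmt12 (n k : ℕ) (hkn : k + 1 ≤ n)
    (p : Fin n → ℝ) (hp : ∀ j : Fin n, k ≤ (j : ℕ) → 0 < p j)
    (hpk : p ⟨k, by omega⟩ < 1 / 2)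
    (q : ℝ) (hq : 0 < q) :
    ∃ c' : ℝ, 0 < c' ∧ c' < 1 ∧
      ∀ h : (Fin (n - k) → ℂ) → ℂ,
        DifferentiableOn ℂ h (ellipsoid (pshift p k)) →
        (∃ ζ ∈ ellipsoid (pshift p k), h ζ ≠ 0) →
        ∀ w : ℂ, 0 < ‖w‖ → ‖w‖ < c' →
          ¬ (∀ ζ ∈ ellipsoid (pshift p k),
            ‖h ζ‖ * rrest p k ζ ^ q ≤
              ‖h (fun j => if (j : ℕ) = 0 then w else 0)‖ *
                rrest p k (fun j => if (j : ℕ) = 0 then w else 0) ^ q) := by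
  obtain ⟨i₀, hi₀⟩ : ∃ i : Fin (n - k), (i : ℕ) = 0 := ⟨⟨0, by omega⟩, rfl⟩
  have hp' := pshift_pos hp
  have hpi₀ : pshift p k i₀ < 1 / 2 := by simpa [pshift_apply, hi₀] using hpk
  have hrrest : ∀ t : ℂ, rrest p k (Pi.single i₀ t) = 1 - ‖t‖ ^ (2 * pshift p k i₀) := fun t =>
    congrArg (1 - ·) (sum_norm_pi_single_rpow (fun j _ => (hp' j).ne') t)
  obtain ⟨c, hc0, hc1, hc⟩ := exists_forall_not_isMaxOn_norm_mul_one_sub_rpow (E := ℂ)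
    (a := 2 * pshift p k i₀) (by linarith [hp' i₀]) (by linarith) hq
  refine ⟨c, hc0, hc1, fun h hh ⟨ζ₀, hζ₀, hne⟩ w hw0 hwc hmax => ?_⟩
  simp only [ite_val_eq_zero_eq_pi_single hi₀] at hmax
  have hhw : h (Pi.single i₀ w) ≠ 0 := fun h0 => by
    have := hmax ζ₀ hζ₀
    rw [h0, norm_zero, zero_mul] at this
    exact this.not_gt <| mul_pos (norm_pos_iff.2 hne)
      (Real.rpow_pos_of_pos (rrest_pos_of_mem_ellipsoid hζ₀) q)
  have hslice : Set.MapsTo (Pi.single i₀) (ball (0 : ℂ) 1) (ellipsoid (pshift p k)) :=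
    fun t ht => pi_single_mem_ellipsoid hp' (mem_ball_zero_iff.1 ht)
  have hg : DifferentiableOn ℂ (fun t => h (Pi.single i₀ t)) (ball 0 1) :=
    hh.comp (differentiable_pi_single i₀).differentiableOn hslice
  refine hc _ hg w hw0 hwc hhw (isMaxOn_iff.2 fun t ht => ?_)
  simpa only [hrrest] using hmax _ (hslice ht)
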